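/- arXiv:0802.2059 — 3 statements merged into one kernel-verified Lean document; each statement's English description precedes it below -/
import Mathlib

section
/- Let M : ℝ → ℝ be the moment generating function of a gamma distribution with shape k > 0 and rate ν > 0, i.e., M(λ) = (1 - λ/ν)^(-k) for λ < ν. Then for S₀ > 0 the function h(S) = S₀ · M'(M⁻¹(S/S₀)) satisfies h(S) = (k/ν) · S · (S/S₀)^(1/k) for all S with 0 < S ≤ S₀. -/
/-!
Write `u = 1 - λ/ν` with `λ = M⁻¹(S/S₀)`, so that `u ^ (-k) = S/S₀`. Differentiating,
`M'(λ) = (k/ν) u ^ (-k-1) = (k/ν) u ^ (-k) · u⁻¹`, and `u⁻¹ = (u ^ (-k)) ^ (1/k) = (S/S₀) ^ (1/k)`.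
-/

open Filter Topology

theorem hasDerivAt_one_sub_div_rpow {ν p x : ℝ} (hx : 1 - x / ν ≠ 0) :
    HasDerivAt (fun y : ℝ => (1 - y / ν) ^ p) (-(p / ν) * (1 - x / ν) ^ (p - 1)) x := by
  have hlin : HasDerivAt (fun y : ℝ => 1 - y / ν) (-(1 / ν)) x := by
    simpa using ((hasDerivAt_id x).div_const ν).const_sub 1
  convert hlin.rpow_const (p := p) (Or.inl hx) using 1
  ring

theorem deriv_eq_of_eqOn_Iio_one_sub_div_rpow {ν k l : ℝ} (hν : 0 < ν) {M : ℝ → ℝ}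
    (hM : ∀ y, y < ν → M y = (1 - y / ν) ^ (-k)) (hl : l < ν) :
    deriv M l = k / ν * (1 - l / ν) ^ (-k - 1) := by
  have hpos : 0 < 1 - l / ν := sub_pos.mpr ((div_lt_one hν).mpr hl)
  have hev : M =ᶠ[𝓝 l] fun y => (1 - y / ν) ^ (-k) :=
    eventually_of_mem (Iio_mem_nhds hl) hM
  rw [hev.deriv_eq, (hasDerivAt_one_sub_div_rpow hpos.ne').deriv]
  ring

theorem Real.rpow_neg_sub_one_eq_mul_rpow_inv {u k : ℝ} (hu : 0 < u) (hk : k ≠ 0) :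
    u ^ (-k - 1) = u ^ (-k) * (u ^ (-k)) ^ (1 / k) := by
  rw [← Real.rpow_mul hu.le, ← Real.rpow_add hu]
  congr 1
  field_simp
  ring

/-- Transmission function from gamma-distributed susceptibility
(Equation (gd1)): if M is the mgf of a gamma distribution with shape `k` and
rate `ν`, i.e. `M λ = (1 - λ/ν)^(-k)` for `λ < ν`, and `Minv` is its inverse
on `(0,1]`, then `h S = S₀ * M'(Minv (S/S₀)) = (k/ν) * S * (S/S₀)^(1/k)`
for `0 < S ≤ S₀`. -/
theorem gamma_transmission_function
    (k ν S₀ : ℝ) (hk : 0 < k) (hν : 0 < ν) (hS₀ : 0 < S₀)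
    (M Minv : ℝ → ℝ)
    (hM : ∀ l : ℝ, l < ν → M l = (1 - l / ν) ^ (-k : ℝ))
    (hMinv : ∀ ξ : ℝ, 0 < ξ → ξ ≤ 1 → Minv ξ < ν ∧ M (Minv ξ) = ξ)
    (S : ℝ) (hS : 0 < S) (hSS₀ : S ≤ S₀) :
    S₀ * deriv M (Minv (S / S₀)) = (k / ν) * S * (S / S₀) ^ (1 / k : ℝ) := by
  obtain ⟨hl, hMl⟩ := hMinv (S / S₀) (div_pos hS hS₀) ((div_le_one hS₀).mpr hSS₀)
  set l := Minv (S / S₀)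
  have hpos : 0 < 1 - l / ν := sub_pos.mpr ((div_lt_one hν).mpr hl)
  have hξ : (1 - l / ν) ^ (-k) = S / S₀ := (hM l hl).symm.trans hMl
  rw [deriv_eq_of_eqOn_Iio_one_sub_div_rpow hν hM hl,
    Real.rpow_neg_sub_one_eq_mul_rpow_inv hpos hk.ne', hξ]
  field_simp
end

section
/- Let M : ℝ → ℝ be the moment generating function of the inverse Gaussian (Wald) distribution with parameters μ, ν > 0, i.e., M(λ) = exp((ν/μ)(1 - √(1 - 2μ²λ/ν))) for λ ≤ ν/(2μ²). Then for S₀ > 0 and 0 < S ≤ S₀, the function h(S) = S₀ · M'(M⁻¹(S/S₀)) equals ν·S / (ν/μ - ln(S/S₀)). -/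
/-!
Write `s = √(1 - 2μ²λ/ν)`, so that `log M(λ) = (ν/μ)(1 - s)`. Below the singular point `ν/(2μ²)`
the chain rule gives `M'(λ) = μ M(λ) / s`, and eliminating `s` turns this into the autonomous
equation `M' = ν M / (ν/μ - log M)`. Evaluating it at `Minv (S/S₀)`, where `M = S/S₀`, gives the
claim; the point `Minv (S/S₀)` is strictly below the singular point because
`M(ν/(2μ²)) = exp(ν/μ) > 1 ≥ S/S₀`.
-/

open Real

noncomputable def waldMgf (μ ν l : ℝ) : ℝ :=
  exp ((ν / μ) * (1 - √(1 - 2 * μ ^ 2 * l / ν)))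

theorem waldMgf_singular_point {μ ν : ℝ} (hμ : μ ≠ 0) (hν : ν ≠ 0) :
    waldMgf μ ν (ν / (2 * μ ^ 2)) = exp (ν / μ) := by
  have hzero : 1 - 2 * μ ^ 2 * (ν / (2 * μ ^ 2)) / ν = 0 := by
    field_simp
    ring
  rw [waldMgf, hzero, sqrt_zero, sub_zero, mul_one]

theorem log_waldMgf (μ ν l : ℝ) :
    log (waldMgf μ ν l) = (ν / μ) * (1 - √(1 - 2 * μ ^ 2 * l / ν)) :=
  log_exp _

theorem hasDerivAt_waldMgf {μ ν l : ℝ}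
    (hl : 0 < 1 - 2 * μ ^ 2 * l / ν) :
    HasDerivAt (waldMgf μ ν) (ν * waldMgf μ ν l / (ν / μ - log (waldMgf μ ν l))) l := by
  have hs : 0 < √(1 - 2 * μ ^ 2 * l / ν) := sqrt_pos.2 hl
  have hinner : HasDerivAt (fun l => 1 - 2 * μ ^ 2 * l / ν) (-(2 * μ ^ 2 / ν)) l := by
    simpa using (((hasDerivAt_id' l).const_mul (2 * μ ^ 2)).div_const ν).const_sub 1
  have hchain := (((hinner.sqrt hl.ne').const_sub 1).const_mul (ν / μ)).exp
  have hden : ν / μ - log (waldMgf μ ν l) = (ν / μ) * √(1 - 2 * μ ^ 2 * l / ν) := by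
    rw [log_waldMgf]
    ring
  refine hchain.congr_deriv ?_
  rw [hden, waldMgf]
  generalize √(1 - 2 * μ ^ 2 * l / ν) = s at hs ⊢
  field_simp

/-- Transmission function from Wald (inverse Gaussian) distributed
susceptibility (Equation (gd3)): if `M λ = exp((ν/μ)(1 - √(1 - 2μ²λ/ν)))` for
`λ ≤ ν/(2μ²)` is the mgf of the inverse Gaussian distribution with parameters
`μ, ν > 0`, and `Minv` its inverse on `(0,1]`, then
`h S = S₀ * M'(Minv (S/S₀)) = ν S / (ν/μ - ln(S/S₀))` for `0 < S ≤ S₀`. -/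
theorem wald_transmission_function
    (μ ν S₀ : ℝ) (hμ : 0 < μ) (hν : 0 < ν) (hS₀ : 0 < S₀)
    (M Minv : ℝ → ℝ)
    (hM : ∀ l : ℝ, l ≤ ν / (2 * μ ^ 2) →
      M l = Real.exp ((ν / μ) * (1 - Real.sqrt (1 - 2 * μ ^ 2 * l / ν))))
    (hMinv : ∀ ξ : ℝ, 0 < ξ → ξ ≤ 1 →
      Minv ξ ≤ ν / (2 * μ ^ 2) ∧ M (Minv ξ) = ξ)
    (S : ℝ) (hS : 0 < S) (hSS₀ : S ≤ S₀) :
    S₀ * deriv M (Minv (S / S₀)) = ν * S / (ν / μ - Real.log (S / S₀)) := by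
  have hξ : S / S₀ ≤ 1 := (div_le_one hS₀).2 hSS₀
  obtain ⟨hle, hMx⟩ := hMinv (S / S₀) (div_pos hS hS₀) hξ
  set x := Minv (S / S₀)
  have hlt : x < ν / (2 * μ ^ 2) := by
    refine hle.lt_of_ne fun hx => ?_
    have hexp : exp (ν / μ) ≤ 1 := by
      rwa [← waldMgf_singular_point hμ.ne' hν.ne', ← hx, waldMgf, ← hM x hle, hMx]
    exact (one_lt_exp_iff.2 (div_pos hν hμ)).not_ge hexp
  have hMx' : waldMgf μ ν x = S / S₀ := (hM x hle).symm.trans hMx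
  have hEq : M =ᶠ[nhds x] waldMgf μ ν :=
    Filter.eventually_of_mem (Iio_mem_nhds hlt) fun l hl => hM l hl.le
  have hpos : 0 < 1 - 2 * μ ^ 2 * x / ν := by
    rw [sub_pos, div_lt_one hν, ← lt_div_iff₀' (by positivity)]
    exact hlt
  rw [hEq.deriv_eq, (hasDerivAt_waldMgf hpos).deriv, hMx']
  field_simp
end

section
/- Let k > 0, R₀ > 1, and define G(z) = (1 + R₀(1-z)/k)^{-k} on [0,1]. Then G(1) = 1, and there exists a unique z* ∈ (0,1) with G(z*) = z*. -/
open Set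

private lemma aux_hasDerivAt_affine_rpow (a c p z : ℝ) (h : a - c * z ≠ 0) :
    HasDerivAt (fun z : ℝ => (a - c * z) ^ p) (-(c * p) * (a - c * z) ^ (p - 1)) z := by
  have h1 : HasDerivAt (fun z : ℝ => a - c * z) (-c) z := by
    simpa using ((hasDerivAt_id z).const_mul c).const_sub a
  have h2 := (Real.hasDerivAt_rpow_const (p := p) (Or.inl h)).comp z h1
  refine h2.congr_deriv ?_
  ring

/-- the final-size equation for gamma-distributed susceptibility.
For `k > 0`, `R₀ > 1`, and `G z = (1 + R₀(1-z)/k)^{-k}` on `[0,1]`, we have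
`G 1 = 1` and there exists a unique `z* ∈ (0,1)` with `G z* = z*`. -/
theorem gamma_final_size_root
    (k R₀ : ℝ) (hk : 0 < k) (hR₀ : 1 < R₀)
    (G : ℝ → ℝ)
    (hG : ∀ z : ℝ, G z = (1 + R₀ * (1 - z) / k) ^ (-k : ℝ)) :
    G 1 = 1 ∧ ∃! z : ℝ, z ∈ Ioo (0 : ℝ) 1 ∧ G z = z := by
  have hk' : k ≠ 0 := ne_of_gt hk
  set c : ℝ := R₀ / k with hc
  have hcpos : 0 < c := div_pos (by linarith) hk
  have hck : c * k = R₀ := div_mul_cancel₀ _ hk'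
  set a : ℝ := 1 + c with ha
  have hGe : ∀ z : ℝ, G z = (a - c * z) ^ (-k : ℝ) := by
    intro z
    rw [hG]
    congr 1
    field_simp [ha, hc]
    rw [ha, ← hck]
    ring
  have ha1 : a - c * 1 = 1 := by ring
  have hG1 : G 1 = 1 := by rw [hGe 1, ha1, Real.one_rpow]
  refine ⟨hG1, ?_⟩
  set F : ℝ → ℝ := fun z => (a - c * z) ^ (-k : ℝ) - z with hF
  have hulb : ∀ z : ℝ, z ≤ 1 → 1 ≤ a - c * z := by
    intro z hz
    nlinarith
  have hFd : ∀ z : ℝ, a - c * z ≠ 0 →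
      HasDerivAt F (c * k * (a - c * z) ^ (-k - 1 : ℝ) - 1) z := by
    intro z hz
    have h := (aux_hasDerivAt_affine_rpow a c (-k) z hz).sub (hasDerivAt_id z)
    have he : (-k : ℝ) - 1 = -k - 1 := by ring
    refine h.congr_deriv ?_
    rw [he]
    ring
  have hF1 : F 1 = 0 := by
    simp only [hF, ha1, Real.one_rpow]
    ring
  have hFderiv1 : HasDerivAt F (R₀ - 1) 1 := by
    have h := hFd 1 (by rw [ha1]; norm_num)
    rw [ha1, Real.one_rpow, hck] at h
    simpa using h
  have hFne : ∀ z ∈ Icc (0:ℝ) 1, a - c * z ≠ 0 := by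
    intro z hz
    have := hulb z hz.2
    linarith
  have hFc : ContinuousOn F (Icc 0 1) := fun z hz =>
    ((hFd z (hFne z hz)).differentiableAt).continuousAt.continuousWithinAt
  -- strict convexity
  have hadiv : (1:ℝ) < a / c := (one_lt_div hcpos).2 (by rw [ha]; linarith)
  have hU : ∀ z ∈ Iio (a / c), 0 < a - c * z := by
    intro z hz
    rw [mem_Iio, lt_div_iff₀ hcpos] at hz
    linarith
  have hconv : StrictConvexOn ℝ (Icc 0 1) F := by
    apply strictConvexOn_of_deriv2_pos (convex_Icc 0 1) hFc
    intro x hx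
    rw [interior_Icc] at hx
    have hx' : x ∈ Iio (a / c) := lt_trans hx.2 hadiv
    have hEq : deriv F =ᶠ[nhds x] fun z => c * k * (a - c * z) ^ (-k - 1 : ℝ) - 1 :=
      Filter.eventually_of_mem (isOpen_Iio.mem_nhds hx')
        (fun z hz => (hFd z (hU z hz).ne').deriv)
    have h2 : HasDerivAt (fun z => c * k * (a - c * z) ^ (-k - 1 : ℝ) - 1)
        (c * c * k * (k + 1) * (a - c * x) ^ (-k - 2 : ℝ)) x := by
      have h := ((aux_hasDerivAt_affine_rpow a c (-k - 1) x (hU x hx').ne').const_mul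
        (c * k)).sub_const 1
      have he : (-k - 1 : ℝ) - 1 = -k - 2 := by ring
      rw [he] at h
      refine h.congr_deriv ?_
      ring
    have : deriv^[2] F x = deriv (deriv F) x := rfl
    rw [this, hEq.deriv_eq, h2.deriv]
    have := Real.rpow_pos_of_pos (hU x hx') (-k - 2 : ℝ)
    positivity
  -- existence of a point with F < 0
  obtain ⟨w, hw, hFw⟩ : ∃ w ∈ Ioo (0:ℝ) 1, F w < 0 := by
    have hslope := hasDerivAt_iff_tendsto_slope.mp hFderiv1
    have hpos : ∀ᶠ z in nhdsWithin (1:ℝ) {(1:ℝ)}ᶜ, 0 < slope F 1 z :=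
      hslope.eventually (eventually_gt_nhds (by linarith))
    have hle : nhdsWithin (1:ℝ) (Iio 1) ≤ nhdsWithin (1:ℝ) {(1:ℝ)}ᶜ :=
      nhdsWithin_mono _ (fun z hz => ne_of_lt hz)
    have hpos' : ∀ᶠ z in nhdsWithin (1:ℝ) (Iio 1), 0 < slope F 1 z := hpos.filter_mono hle
    have hIoo : Ioo (0:ℝ) 1 ∈ nhdsWithin (1:ℝ) (Iio 1) :=
      Ioo_mem_nhdsLT_of_mem ⟨zero_lt_one, le_rfl⟩
    have hmem : ∀ᶠ z in nhdsWithin (1:ℝ) (Iio 1), z ∈ Ioo (0:ℝ) 1 :=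
      Filter.eventually_of_mem hIoo (fun z hz => hz)
    obtain ⟨w, hw0, hw1⟩ := (hpos'.and hmem).exists
    refine ⟨w, hw1, ?_⟩
    have hs : 0 < (F w - F 1) / (w - 1) := by
      have := hw0
      rwa [slope_def_field] at this
    rw [hF1, sub_zero] at hs
    rcases div_pos_iff.mp hs with ⟨_, h⟩ | ⟨h, _⟩
    · linarith [hw1.2]
    · exact h
  have hF0 : 0 < F 0 := by
    have hap : (0:ℝ) < a - c * 0 := by linarith [hulb 0 zero_le_one]
    have := Real.rpow_pos_of_pos hap (-k : ℝ)
    simpa [hF] using this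
  -- IVT
  obtain ⟨x, hx, hFx⟩ : ∃ x ∈ Ioo (0:ℝ) w, F x = 0 := by
    have hsub : Icc (0:ℝ) w ⊆ Icc 0 1 := Icc_subset_Icc le_rfl hw.2.le
    have hivt := intermediate_value_Ioo' (le_of_lt hw.1) (hFc.mono hsub)
    obtain ⟨x, hxm, hx0⟩ := hivt ⟨hFw, hF0⟩
    exact ⟨x, hxm, hx0⟩
  have hGF : ∀ z : ℝ, G z = z ↔ F z = 0 := by
    intro z
    rw [hGe z, hF]
    constructor <;> intro h
    · simp only [h]; ring
    · have := sub_eq_zero.mp h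
      linarith [this]
  -- uniqueness via strict convexity
  have key : ∀ u v : ℝ, u ∈ Ioo (0:ℝ) 1 → v ∈ Ioo (0:ℝ) 1 → u < v → F u = 0 → F v = 0 → False := by
    intro u v hu hv huv hFu hFv
    have h1u : 0 < 1 - u := by linarith [hu.2]
    have hs : 0 < (1 - v) / (1 - u) := div_pos (by linarith [hv.2]) h1u
    have ht : 0 < (v - u) / (1 - u) := div_pos (by linarith) h1u
    have hst : (1 - v) / (1 - u) + (v - u) / (1 - u) = 1 := by
      field_simp
      ring
    have hmem1 : (1:ℝ) ∈ Icc (0:ℝ) 1 := ⟨zero_le_one, le_rfl⟩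
    have hmemu : u ∈ Icc (0:ℝ) 1 := ⟨hu.1.le, hu.2.le⟩
    have hne1 : u ≠ 1 := ne_of_lt hu.2
    have hcomb := hconv.2 hmemu hmem1 hne1 hs ht hst
    rw [smul_eq_mul, smul_eq_mul, smul_eq_mul, smul_eq_mul, hFu, hF1] at hcomb
    have harg : (1 - v) / (1 - u) * u + (v - u) / (1 - u) * 1 = v := by
      field_simp
      ring
    rw [harg] at hcomb
    simp only [mul_zero, add_zero] at hcomb
    linarith [hcomb, hFv.symm ▸ hcomb]
  refine ⟨x, ⟨⟨hx.1, lt_trans hx.2 hw.2⟩, (hGF x).mpr hFx⟩, ?_⟩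
  rintro y ⟨hy, hGy⟩
  by_contra hne
  have hFy : F y = 0 := (hGF y).mp hGy
  have hxm : x ∈ Ioo (0:ℝ) 1 := ⟨hx.1, lt_trans hx.2 hw.2⟩
  rcases lt_or_gt_of_ne hne with h | h
  · exact key y x hy hxm h hFy hFx
  · exact key x y hxm hy h hFx hFy
end
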